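/- arXiv:2601.18549 — 2 statements merged into one kernel-verified Lean document; each statement's English description precedes it below -/
import Mathlib

section
/- Let G=(X,w,κ,μ) be a connected graph. Suppose either f satisfies (F1) and λ>0, or f satisfies (F2) with constant L>0 and 0<λ<1/L. Let u_1,u_2∈dom(Δ) satisfy u_k+λ(−f(u_k)+Δu_k)=g_k on X (k=1,2), and assume one of: (a) G contains no infinite path; or (b) G satisfies (IP) and there exists p>0 such that ∑_n |u_1(x_n)−u_2(x_n)|^p μ(x_n)<∞ for every infinite path {x_n}. If g_1 ≥ g_2 on X, then u_1 ≥ u_2 on X. In particular, if G contains no infinite path or satisfies (IP), then for every 1≤p<∞ the map u ↦ u+λ(−f(u)+Δu) is injective on dom_p(𝒜). -/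
open Filter Topology MeasureTheory

/-- A weighted graph `G = (X, w, κ, μ)`. -/
structure WGraph (X : Type*) where
  w : X → X → ℝ
  kap : X → ℝ
  mu : X → ℝ
  w_nonneg : ∀ x y, 0 ≤ w x y
  w_symm : ∀ x y, w x y = w y x
  w_loopless : ∀ x, w x x = 0
  w_summable : ∀ x, Summable (fun y => w x y)
  kap_nonneg : ∀ x, 0 ≤ kap x
  mu_pos : ∀ x, 0 < mu x

namespace WGraph

variable {X : Type*}

/-- Adjacency: `x ∼ y` iff `w x y > 0`. -/
def Adj (G : WGraph X) (x y : X) : Prop := 0 < G.w x y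

/-- `G` is connected: any two nodes are joined by a finite walk. -/
def Connected (G : WGraph X) : Prop := ∀ x y : X, Relation.ReflTransGen G.Adj x y

/-- An infinite path: injective sequence of consecutively adjacent nodes. -/
def InfinitePath (G : WGraph X) (γ : ℕ → X) : Prop :=
  Function.Injective γ ∧ ∀ n, G.Adj (γ n) (γ (n + 1))

/-- Condition (IP): every infinite path has infinite total measure. -/
def CondIP (G : WGraph X) : Prop :=
  ∀ γ : ℕ → X, G.InfinitePath γ → ¬ Summable (fun n => G.mu (γ n))

/-- Condition (B): bounded edge degree. -/
def CondB (G : WGraph X) : Prop :=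
  ∃ C : ℝ, ∀ x, (∑' y, G.w x y) / G.mu x ≤ C

/-- Condition (C_p). -/
def CondCp (G : WGraph X) (p : ℝ) : Prop :=
  ∀ x, Summable (fun y => G.w x y ^ p / G.mu y ^ (p - 1))

/-- Membership in `ℓ^p(X,μ)` for `1 ≤ p < ∞`. -/
def memLp (G : WGraph X) (p : ℝ) (u : X → ℝ) : Prop :=
  Summable (fun x => |u x| ^ p * G.mu x)

/-- The `ℓ^p(X,μ)`-norm. -/
noncomputable def lpNorm (G : WGraph X) (p : ℝ) (u : X → ℝ) : ℝ :=
  (∑' x, |u x| ^ p * G.mu x) ^ (1 / p)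

/-- Membership in the formal domain of the graph Laplacian. -/
def inDomLap (G : WGraph X) (u : X → ℝ) : Prop :=
  ∀ x, Summable (fun y => G.w x y * |u y|)

/-- The formal graph Laplacian. -/
noncomputable def lap (G : WGraph X) (u : X → ℝ) (x : X) : ℝ :=
  (1 / G.mu x) * ∑' y, G.w x y * (u x - u y) + (G.kap x / G.mu x) * u x

/-- The nonlinear operator `𝒜 u = -f ∘ u + Δ u`. -/
noncomputable def Aop (G : WGraph X) (f : ℝ → ℝ) (u : X → ℝ) (x : X) : ℝ :=
  -f (u x) + G.lap u x

/-- `dom_p(𝒜)`. -/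
def inDomA (G : WGraph X) (f : ℝ → ℝ) (p : ℝ) (u : X → ℝ) : Prop :=
  G.memLp p u ∧ G.inDomLap u ∧ G.memLp p (G.Aop f u)

end WGraph

/-- Condition (F1): `f` continuous, monotone decreasing, `f 0 = 0`. -/
def CondF1 (f : ℝ → ℝ) : Prop := Continuous f ∧ Antitone f ∧ f 0 = 0

/-- Condition (F2): `f` uniformly Lipschitz with constant `L > 0`, `f 0 = 0`. -/
def CondF2 (f : ℝ → ℝ) (L : ℝ) : Prop :=
  0 < L ∧ (∀ s t : ℝ, |f t - f s| ≤ L * |t - s|) ∧ f 0 = 0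

/-! If `u₂ > u₁` somewhere, the monotonicity of `s ↦ s - λ f(s)` and the discrete maximum
principle force `u₂ - u₁` to increase strictly at some neighbour. Iterating produces an infinite
path along which `u₂ - u₁` increases, hence stays above a positive constant. Without infinite
paths this is impossible; under (IP) it contradicts the summability of `|u₁ - u₂|ᵖ μ` along the
path. Injectivity on `dom_p(𝒜)` follows by applying the comparison in both directions, the
summability along paths being inherited from `ℓᵖ`. -/

lemma Antitone.strictMono_sub_mul {f : ℝ → ℝ} (hf : Antitone f) {lam : ℝ} (hlam : 0 ≤ lam) :
    StrictMono fun s => s - lam * f s := by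
  intro s t hst
  have := mul_le_mul_of_nonneg_left (hf hst.le) hlam
  linarith

lemma strictMono_sub_mul_of_abs_sub_le {f : ℝ → ℝ} {L lam : ℝ}
    (hf : ∀ s t : ℝ, |f t - f s| ≤ L * |t - s|) (hlam : 0 ≤ lam) (hlamL : lam * L < 1) :
    StrictMono fun s => s - lam * f s := by
  intro s t hst
  have hLip : f t - f s ≤ L * (t - s) := by
    simpa only [abs_of_pos (sub_pos.2 hst)] using (le_abs_self _).trans (hf s t)
  nlinarith [mul_le_mul_of_nonneg_left hLip hlam]

lemma abs_sub_rpow_le (a b : ℝ) {p : ℝ} (hp : 0 ≤ p) :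
    |a - b| ^ p ≤ 2 ^ p * (|a| ^ p + |b| ^ p) := by
  wlog hab : |a| ≤ |b| generalizing a b
  · simpa only [abs_sub_comm, add_comm] using this b a (le_of_not_ge hab)
  calc |a - b| ^ p ≤ (2 * |b|) ^ p := by gcongr; linarith [abs_sub a b]
    _ = 2 ^ p * |b| ^ p := Real.mul_rpow zero_le_two (abs_nonneg b)
    _ ≤ 2 ^ p * (|a| ^ p + |b| ^ p) := by gcongr; exact le_add_of_nonneg_left (by positivity)

lemma summable_of_summable_rpow_mul {ι : Type*} {a b : ι → ℝ} {c p : ℝ} (hc : 0 < c)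
    (hp : 0 ≤ p) (ha : ∀ i, c ≤ a i) (hb : ∀ i, 0 ≤ b i)
    (h : Summable fun i => a i ^ p * b i) : Summable b := by
  have hcp : 0 < c ^ p := Real.rpow_pos_of_pos hc p
  refine (h.mul_left (c ^ p)⁻¹).of_nonneg_of_le hb fun i => ?_
  rw [le_inv_mul_iff₀ hcp]
  exact mul_le_mul_of_nonneg_right (Real.rpow_le_rpow hc.le (ha i) hp) (hb i)

namespace WGraph

variable {X : Type*} {G : WGraph X}

lemma memLp.sub {p : ℝ} (hp : 0 ≤ p) {u v : X → ℝ} (hu : G.memLp p u) (hv : G.memLp p v) :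
    G.memLp p (u - v) := by
  refine ((hu.add hv).mul_left (2 ^ p)).of_nonneg_of_le
    (fun x => mul_nonneg (by positivity) (G.mu_pos x).le) fun x => ?_
  calc |u x - v x| ^ p * G.mu x ≤ 2 ^ p * (|u x| ^ p + |v x| ^ p) * G.mu x := by
        gcongr
        · exact (G.mu_pos x).le
        · exact abs_sub_rpow_le _ _ hp
    _ = 2 ^ p * (|u x| ^ p * G.mu x + |v x| ^ p * G.mu x) := by ring

lemma summable_mul_sub_of_inDomLap {u : X → ℝ} (hu : G.inDomLap u) (x : X) :
    Summable fun y => G.w x y * (u x - u y) := by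
  have hwu : Summable fun y => G.w x y * u y := by
    rw [← summable_abs_iff]
    refine (hu x).congr fun y => ?_
    rw [abs_mul, abs_of_nonneg (G.w_nonneg x y)]
  exact (((G.w_summable x).mul_left (u x)).sub hwu).congr fun y => by ring

lemma lap_sub {u v : X → ℝ} (hu : G.inDomLap u) (hv : G.inDomLap v) (x : X) :
    G.lap (u - v) x = G.lap u x - G.lap v x := by
  have hsum : ∑' y, G.w x y * ((u - v) x - (u - v) y)
      = ∑' y, G.w x y * (u x - u y) - ∑' y, G.w x y * (v x - v y) := by
    rw [← (summable_mul_sub_of_inDomLap hu x).tsum_sub (summable_mul_sub_of_inDomLap hv x)]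
    exact tsum_congr fun y => by simp only [Pi.sub_apply]; ring
  rw [lap, lap, lap, hsum, Pi.sub_apply]
  ring

/-- No summability of `v` is needed: a divergent `tsum` is `0`. -/
lemma lap_nonneg_of_forall_adj_le {v : X → ℝ} {x : X} (hx : 0 ≤ v x)
    (hmax : ∀ y, G.Adj x y → v y ≤ v x) : 0 ≤ G.lap v x := by
  have hμ := G.mu_pos x
  have hterm : ∀ y, 0 ≤ G.w x y * (v x - v y) := fun y => by
    rcases (G.w_nonneg x y).eq_or_lt with h | h
    · rw [← h, zero_mul]
    · exact mul_nonneg h.le (sub_nonneg.2 (hmax y h))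
  have hκ : 0 ≤ G.kap x / G.mu x := div_nonneg (G.kap_nonneg x) hμ.le
  exact add_nonneg (mul_nonneg (by positivity) (tsum_nonneg hterm)) (mul_nonneg hκ hx)

lemma exists_adj_sub_lt_sub {f : ℝ → ℝ} {lam : ℝ} (hlam : 0 ≤ lam)
    (hmono : StrictMono fun s => s - lam * f s) {u₁ u₂ : X → ℝ}
    (h₁ : G.inDomLap u₁) (h₂ : G.inDomLap u₂) {x : X}
    (hle : u₂ x + lam * G.Aop f u₂ x ≤ u₁ x + lam * G.Aop f u₁ x) (hx : u₁ x < u₂ x) :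
    ∃ y, G.Adj x y ∧ u₂ x - u₁ x < u₂ y - u₁ y := by
  by_contra! hmax
  have hlap : 0 ≤ G.lap (u₂ - u₁) x :=
    lap_nonneg_of_forall_adj_le (sub_nonneg.2 hx.le) hmax
  rw [lap_sub h₂ h₁] at hlap
  have hlocal := hmono hx
  simp only [Aop] at hle hlocal
  nlinarith [mul_nonneg hlam hlap]

lemma exists_infinitePath_strictMono {v : X → ℝ} {x₀ : X}
    (hstep : ∀ x, v x₀ ≤ v x → ∃ y, G.Adj x y ∧ v x < v y) :
    ∃ γ : ℕ → X, G.InfinitePath γ ∧ γ 0 = x₀ ∧ StrictMono (v ∘ γ) := by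
  classical
  let next : X → X := fun x => if h : v x₀ ≤ v x then (hstep x h).choose else x
  have hnext : ∀ x, v x₀ ≤ v x → G.Adj x (next x) ∧ v x < v (next x) := fun x h => by
    simp only [next, dif_pos h]
    exact (hstep x h).choose_spec
  let γ : ℕ → X := fun n => next^[n] x₀
  have hsucc : ∀ n, γ (n + 1) = next (γ n) := fun n => Function.iterate_succ_apply' next n x₀
  have hge : ∀ n, v x₀ ≤ v (γ n) := by
    intro n
    induction n with
    | zero => exact le_rfl
    | succ n ih => rw [hsucc]; exact ih.trans (hnext _ ih).2.le
  have hγ : StrictMono (v ∘ γ) := strictMono_nat_of_lt_succ fun n => by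
    simpa only [Function.comp, hsucc] using (hnext _ (hge n)).2
  refine ⟨γ, ⟨hγ.injective.of_comp, fun n => ?_⟩, rfl, hγ⟩
  rw [hsucc]
  exact (hnext _ (hge n)).1

theorem le_of_resolvent_le {f : ℝ → ℝ} {lam : ℝ} (hlam : 0 ≤ lam)
    (hmono : StrictMono fun s => s - lam * f s) {u₁ u₂ : X → ℝ}
    (h₁ : G.inDomLap u₁) (h₂ : G.inDomLap u₂)
    (hle : ∀ x, u₂ x + lam * G.Aop f u₂ x ≤ u₁ x + lam * G.Aop f u₁ x)
    (hpaths : (∀ γ : ℕ → X, ¬ G.InfinitePath γ) ∨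
      (G.CondIP ∧ ∃ p > (0 : ℝ), ∀ γ : ℕ → X, G.InfinitePath γ →
        Summable (fun n => |u₁ (γ n) - u₂ (γ n)| ^ p * G.mu (γ n)))) (x₀ : X) :
    u₂ x₀ ≤ u₁ x₀ := by
  by_contra! hx₀
  set v : X → ℝ := u₂ - u₁
  have hv₀ : 0 < v x₀ := sub_pos.2 hx₀
  obtain ⟨γ, hγ, hγ₀, hincr⟩ := exists_infinitePath_strictMono fun x hx =>
    exists_adj_sub_lt_sub hlam hmono h₁ h₂ (hle x) (sub_pos.1 (hv₀.trans_le hx))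
  have hge : ∀ n, v x₀ ≤ |u₁ (γ n) - u₂ (γ n)| := fun n => by
    rw [abs_sub_comm, ← hγ₀]
    exact (hincr.monotone n.zero_le).trans (le_abs_self _)
  rcases hpaths with hno | ⟨hIP, p, hp, hsum⟩
  · exact hno γ hγ
  · exact hIP γ hγ <| summable_of_summable_rpow_mul hv₀ hp.le hge
      (fun n => (G.mu_pos _).le) (hsum γ hγ)

end WGraph

theorem stmt4_general {X : Type*} (G : WGraph X) (f : ℝ → ℝ) (lam : ℝ)
    (hf : (CondF1 f ∧ 0 < lam) ∨ (∃ L, CondF2 f L ∧ 0 < lam ∧ lam < 1 / L)) :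
    (∀ (u₁ u₂ g₁ g₂ : X → ℝ), G.inDomLap u₁ → G.inDomLap u₂ →
      (∀ x, u₁ x + lam * G.Aop f u₁ x = g₁ x) →
      (∀ x, u₂ x + lam * G.Aop f u₂ x = g₂ x) →
      ((∀ γ : ℕ → X, ¬ G.InfinitePath γ) ∨
        (G.CondIP ∧ ∃ p > (0 : ℝ), ∀ γ : ℕ → X, G.InfinitePath γ →
          Summable (fun n => |u₁ (γ n) - u₂ (γ n)| ^ p * G.mu (γ n)))) →
      (∀ x, g₂ x ≤ g₁ x) → ∀ x, u₂ x ≤ u₁ x) ∧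
    (((∀ γ : ℕ → X, ¬ G.InfinitePath γ) ∨ G.CondIP) →
      ∀ p : ℝ, 1 ≤ p →
        Set.InjOn (fun (u : X → ℝ) => fun x => u x + lam * G.Aop f u x)
          {u : X → ℝ | G.inDomA f p u}) := by
  obtain ⟨hlam, hmono⟩ : 0 ≤ lam ∧ StrictMono fun s => s - lam * f s := by
    rcases hf with ⟨⟨-, hanti, -⟩, hlam⟩ | ⟨L, ⟨hL, hLip, -⟩, hlam, hlamL⟩
    · exact ⟨hlam.le, hanti.strictMono_sub_mul hlam.le⟩
    · exact ⟨hlam.le, strictMono_sub_mul_of_abs_sub_le hLip hlam.le ((lt_div_iff₀ hL).1 hlamL)⟩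
  refine ⟨fun u₁ u₂ g₁ g₂ h₁ h₂ he₁ he₂ hpaths hg => WGraph.le_of_resolvent_le hlam hmono h₁ h₂
    (fun x => (he₂ x).trans_le ((hg x).trans_eq (he₁ x).symm)) hpaths, ?_⟩
  intro hpaths p hp u₁ hu₁ u₂ hu₂ heq
  have hpaths' : ∀ {u v : X → ℝ}, G.memLp p u → G.memLp p v →
      (∀ γ : ℕ → X, ¬ G.InfinitePath γ) ∨ (G.CondIP ∧ ∃ q > (0 : ℝ), ∀ γ : ℕ → X,
        G.InfinitePath γ → Summable (fun n => |u (γ n) - v (γ n)| ^ q * G.mu (γ n))) :=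
    fun hu hv => hpaths.imp_right fun hIP =>
      ⟨hIP, p, by linarith, fun γ hγ => (hu.sub (by linarith) hv).comp_injective hγ.1⟩
  funext x
  exact le_antisymm
    (WGraph.le_of_resolvent_le hlam hmono hu₂.2.1 hu₁.2.1 (fun y => (congrFun heq y).le)
      (hpaths' hu₂.1 hu₁.1) x)
    (WGraph.le_of_resolvent_le hlam hmono hu₁.2.1 hu₂.2.1 (fun y => (congrFun heq y).ge)
      (hpaths' hu₁.1 hu₂.1) x)

/-- comparison of solutions of `(id + λ𝒜)u_k = g_k`, and injectivity
of `id + λ𝒜` on `dom_p(𝒜)` when `G` has no infinite path or satisfies (IP). -/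
theorem stmt4 {X : Type*} [Countable X] (G : WGraph X) (f : ℝ → ℝ) (lam : ℝ)
    (hG : G.Connected)
    (hf : (CondF1 f ∧ 0 < lam) ∨ (∃ L, CondF2 f L ∧ 0 < lam ∧ lam < 1 / L)) :
    (∀ (u₁ u₂ g₁ g₂ : X → ℝ), G.inDomLap u₁ → G.inDomLap u₂ →
      (∀ x, u₁ x + lam * G.Aop f u₁ x = g₁ x) →
      (∀ x, u₂ x + lam * G.Aop f u₂ x = g₂ x) →
      ((∀ γ : ℕ → X, ¬ G.InfinitePath γ) ∨
        (G.CondIP ∧ ∃ p > (0 : ℝ), ∀ γ : ℕ → X, G.InfinitePath γ →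
          Summable (fun n => |u₁ (γ n) - u₂ (γ n)| ^ p * G.mu (γ n)))) →
      (∀ x, g₂ x ≤ g₁ x) → ∀ x, u₂ x ≤ u₁ x) ∧
    (((∀ γ : ℕ → X, ¬ G.InfinitePath γ) ∨ G.CondIP) →
      ∀ p : ℝ, 1 ≤ p →
        Set.InjOn (fun (u : X → ℝ) => fun x => u x + lam * G.Aop f u x)
          {u : X → ℝ | G.inDomA f p u}) :=
  stmt4_general G f lam hf
end

section
/- Let G=(X,w,κ,μ) be a graph and 1≤p<∞, with condition (C_p) assumed if p>1. Fix an increasing exhaustion {X_n} of X by finite subsets and let Ω_p be the associated set. (i) If f satisfies (F1), then 𝒜 restricted to Ω_p is accretive on ℓ^p(X,μ): ‖(u−v)+λ(𝒜u−𝒜v)‖_p ≥ ‖u−v‖_p for all u,v∈Ω_p and λ>0. (ii) If f satisfies (F2) with constant L>0, then 𝒜 restricted to Ω_p is L-accretive on ℓ^p(X,μ), i.e. ‖(u−v)+λ(𝒜u−𝒜v)‖_p ≥ (1−Lλ)‖u−v‖_p for all u,v∈Ω_p and 0≤λL<1. -/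
open Filter Topology MeasureTheory

namespace WGraph

variable {X : Type*}

/-- The Dirichlet Laplacian of the Dirichlet subgraph on `Y ⊆ X`, applied to the
restriction to `Y` of a function on `X` (extended by zero outside `Y`). -/
noncomputable def lapDir (G : WGraph X) (Y : Set X) (u : X → ℝ) (x : X) : ℝ :=
  (1 / G.mu x) * (∑' y : Y, G.w x y.1 * (u x - u y.1))
    + ((G.kap x + ∑' z : ↥(Yᶜ), G.w x z.1) / G.mu x) * u x

-- The approximating operator `𝒜_n = i_n (F + Δ_{dir,n}) π_n` on the Dirichlet
-- subgraph with node set `Y`.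
open Classical in
noncomputable def AopDir (G : WGraph X) (f : ℝ → ℝ) (Y : Set X) (u : X → ℝ) (x : X) : ℝ :=
  if x ∈ Y then -f (u x) + G.lapDir Y u x else 0

open Filter Topology in
/-- The set `Ω_p` associated with the exhaustion `Xn`. -/
def OmegaP (G : WGraph X) (f : ℝ → ℝ) (p : ℝ) (Xn : ℕ → Set X) : Set (X → ℝ) :=
  {u | G.inDomA f p u ∧ ∃ un : ℕ → X → ℝ,
    (∀ n, Function.support (un n) ⊆ Xn n) ∧
    Tendsto (fun n => G.lpNorm p (fun x => un n x - u x)) atTop (nhds 0) ∧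
    Tendsto (fun n => G.lpNorm p (fun x => G.AopDir f (Xn n) (un n) x - G.Aop f u x))
      atTop (nhds 0)}

end WGraph

/-!
On a finite Dirichlet subgraph, pair `g = u - v` with `signPow p g = sign g · |g| ^ (p - 1)`.
Convexity of `|t| ^ p` gives `|g + λ d| ^ p ≥ |g| ^ p + p λ (signPow p g) d` pointwise, so it
suffices that `∑ μ (signPow p g) d ≥ 0` for `d = 𝒜ₙ u - 𝒜ₙ v`. Symmetrising the edge sum shows
this for the Dirichlet Laplacian (as `signPow p` is monotone), and the killing term and an
antitone `f` contribute nonnegative terms. A Lipschitz `f` is reduced to the antitone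
`t ↦ f t - L t`, at the cost of the factor `1 - L λ`. The estimates pass to `Ω_p` through the
isometry `u ↦ u μ ^ (1 / p)` into `lp`, in which all the approximating sequences converge.
-/

open Finset Function Filter Topology

theorem Monotone.sub_mul_sub_nonneg {α : Type*} [Ring α] [LinearOrder α] [IsOrderedRing α]
    {φ : α → α} (hφ : Monotone φ) (a b : α) : 0 ≤ (a - b) * (φ a - φ b) := by
  rcases le_total a b with h | h
  · exact mul_nonneg_of_nonpos_of_nonpos (sub_nonpos.2 h) (sub_nonpos.2 (hφ h))
  · exact mul_nonneg (sub_nonneg.2 h) (sub_nonneg.2 (hφ h))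

theorem Monotone.sum_mul_sum_mul_sub_nonneg {ι : Type*} {φ : ℝ → ℝ} (hφ : Monotone φ)
    (s : Finset ι) {w : ι → ι → ℝ} (hw : ∀ i j, 0 ≤ w i j) (hsymm : ∀ i j, w i j = w j i)
    (g : ι → ℝ) : 0 ≤ ∑ i ∈ s, φ (g i) * ∑ j ∈ s, w i j * (g i - g j) := by
  have hswap : ∑ i ∈ s, φ (g i) * ∑ j ∈ s, w i j * (g i - g j)
      = ∑ i ∈ s, ∑ j ∈ s, -(φ (g j) * (w i j * (g i - g j))) := by
    simp_rw [Finset.mul_sum]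
    rw [Finset.sum_comm]
    refine sum_congr rfl fun i _ => sum_congr rfl fun j _ => ?_
    rw [hsymm]
    ring
  have hsymmetrised : 2 * ∑ i ∈ s, φ (g i) * ∑ j ∈ s, w i j * (g i - g j)
      = ∑ i ∈ s, ∑ j ∈ s, w i j * ((g i - g j) * (φ (g i) - φ (g j))) := by
    rw [two_mul]
    nth_rw 2 [hswap]
    simp_rw [Finset.mul_sum, ← sum_add_distrib]
    refine sum_congr rfl fun i _ => sum_congr rfl fun j _ => ?_
    ring
  have : 0 ≤ 2 * ∑ i ∈ s, φ (g i) * ∑ j ∈ s, w i j * (g i - g j) := hsymmetrised ▸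
    sum_nonneg fun i _ => sum_nonneg fun j _ => mul_nonneg (hw i j) (hφ.sub_mul_sub_nonneg _ _)
  linarith

/-- `t ↦ signPow p t` is the derivative of `t ↦ |t| ^ p / p`. -/
noncomputable def signPow (p t : ℝ) : ℝ := (SignType.sign t : ℝ) * |t| ^ (p - 1)

section signPow

variable {p : ℝ}

@[simp]
theorem signPow_zero (p : ℝ) : signPow p 0 = 0 := by
  simp [signPow]

theorem signPow_neg (p t : ℝ) : signPow p (-t) = -signPow p t := by
  simp [signPow, Left.sign_neg]

theorem signPow_of_pos (p : ℝ) {t : ℝ} (ht : 0 < t) : signPow p t = t ^ (p - 1) := by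
  simp [signPow, ht, abs_of_pos ht]

theorem rpow_add_mul_rpow_sub_one_mul_sub_le (hp : 1 ≤ p) {a c : ℝ} (ha : 0 < a) (hc : 0 ≤ c) :
    a ^ p + p * a ^ (p - 1) * (c - a) ≤ c ^ p := by
  have h := one_add_mul_self_le_rpow_one_add (s := c / a - 1)
    (by have := div_nonneg hc ha.le; linarith) hp
  rw [add_sub_cancel, Real.div_rpow hc ha.le, le_div_iff₀ (by positivity)] at h
  rw [Real.rpow_sub_one ha.ne']
  calc _ = (1 + p * (c / a - 1)) * a ^ p := by field_simp
    _ ≤ c ^ p := h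

theorem abs_rpow_add_mul_signPow_mul_sub_le (hp : 1 ≤ p) (a b : ℝ) :
    |a| ^ p + p * signPow p a * (b - a) ≤ |b| ^ p := by
  wlog ha : 0 ≤ a generalizing a b with H
  · have h := H (-a) (-b) (by linarith)
    rw [signPow_neg, abs_neg, abs_neg] at h
    linarith
  rcases ha.eq_or_lt with rfl | ha
  · simp [Real.zero_rpow (by linarith : p ≠ 0), Real.rpow_nonneg (abs_nonneg b)]
  rw [signPow_of_pos p ha, abs_of_pos ha]
  have hb : p * a ^ (p - 1) * (b - a) ≤ p * a ^ (p - 1) * (|b| - a) :=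
    mul_le_mul_of_nonneg_left (by linarith [le_abs_self b]) (by positivity)
  linarith [rpow_add_mul_rpow_sub_one_mul_sub_le hp ha (abs_nonneg b)]

theorem signPow_monotone (hp : 1 ≤ p) : Monotone (signPow p) := by
  intro a b hab
  rcases hab.eq_or_lt with rfl | hlt
  · rfl
  by_contra! h
  nlinarith [abs_rpow_add_mul_signPow_mul_sub_le hp a b, abs_rpow_add_mul_signPow_mul_sub_le hp b a,
    mul_pos (mul_pos (by linarith : (0 : ℝ) < p) (sub_pos.2 h)) (sub_pos.2 hlt)]

end signPow

namespace WGraph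

variable {X : Type*} {G : WGraph X} {p : ℝ}

theorem lpNorm_eq_sum (hp : p ≠ 0) {s : Finset X} {u : X → ℝ} (hu : support u ⊆ s) :
    G.lpNorm p u = (∑ x ∈ s, |u x| ^ p * G.mu x) ^ (1 / p) := by
  rw [lpNorm, tsum_eq_sum fun x hx => ?_]
  rw [notMem_support.1 fun h => hx (hu h), abs_zero, Real.zero_rpow hp, zero_mul]

theorem lpNorm_const_mul (hp : p ≠ 0) (c : ℝ) (u : X → ℝ) :
    G.lpNorm p (fun x => c * u x) = |c| * G.lpNorm p u := by
  have hterm : ∀ x, |c * u x| ^ p * G.mu x = |c| ^ p * (|u x| ^ p * G.mu x) := fun x => by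
    rw [abs_mul, Real.mul_rpow (abs_nonneg c) (abs_nonneg (u x))]; ring
  rw [lpNorm, lpNorm, tsum_congr hterm, tsum_mul_left,
    Real.mul_rpow (by positivity)
      (tsum_nonneg fun x => mul_nonneg (by positivity) (G.mu_pos x).le),
    ← Real.rpow_mul (abs_nonneg c), mul_one_div_cancel hp, Real.rpow_one]

theorem mu_mul_lapDir (s : Finset X) (g : X → ℝ) (x : X) :
    G.mu x * G.lapDir s g x = ∑ y ∈ s, G.w x y * (g x - g y)
      + (G.kap x + ∑' z : ↥((s : Set X)ᶜ), G.w x z) * g x := by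
  simp only [lapDir, Finset.tsum_subtype' s fun y => G.w x y * (g x - g y)]
  field_simp [(G.mu_pos x).ne']

theorem lapDir_sub (s : Finset X) (u v : X → ℝ) (x : X) :
    G.lapDir s u x - G.lapDir s v x = G.lapDir s (fun y => u y - v y) x := by
  refine mul_left_cancel₀ (G.mu_pos x).ne' ?_
  have hedges : ∑ y ∈ s, G.w x y * (u x - u y) - ∑ y ∈ s, G.w x y * (v x - v y)
      = ∑ y ∈ s, G.w x y * (u x - v x - (u y - v y)) := by
    rw [← sum_sub_distrib]
    exact sum_congr rfl fun y _ => by ring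
  rw [mul_sub, mu_mul_lapDir, mu_mul_lapDir, mu_mul_lapDir, ← hedges]
  ring

theorem sum_mul_mu_mul_lapDir_nonneg {φ : ℝ → ℝ} (hφ : Monotone φ) (hφ0 : φ 0 = 0)
    (s : Finset X) (g : X → ℝ) : 0 ≤ ∑ x ∈ s, φ (g x) * (G.mu x * G.lapDir s g x) := by
  simp_rw [mu_mul_lapDir, mul_add, sum_add_distrib]
  refine add_nonneg (hφ.sum_mul_sum_mul_sub_nonneg s G.w_nonneg G.w_symm g)
    (sum_nonneg fun x _ => ?_)
  have hkill : 0 ≤ G.kap x + ∑' z : ↥((s : Set X)ᶜ), G.w x z :=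
    add_nonneg (G.kap_nonneg x) (tsum_nonneg fun z => G.w_nonneg x z)
  have hsign := hφ.sub_mul_sub_nonneg (g x) 0
  rw [sub_zero, hφ0, sub_zero] at hsign
  calc 0 ≤ (G.kap x + ∑' z : ↥((s : Set X)ᶜ), G.w x z) * (g x * φ (g x)) := mul_nonneg hkill hsign
    _ = _ := by ring

theorem support_AopDir_subset (f : ℝ → ℝ) (Y : Set X) (u : X → ℝ) :
    support (G.AopDir f Y u) ⊆ Y := fun x hx => by
  by_contra h
  exact hx (if_neg h)

theorem AopDir_sub_mul_self {f : ℝ → ℝ} {Y : Set X} {u : X → ℝ} (hu : support u ⊆ Y)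
    (L : ℝ) (x : X) : G.AopDir (fun t => f t - L * t) Y u x = G.AopDir f Y u x + L * u x := by
  by_cases hx : x ∈ Y
  · simp only [AopDir, if_pos hx]
    ring
  · simp only [AopDir, if_neg hx, notMem_support.1 fun h => hx (hu h)]
    ring

theorem sum_signPow_mul_mu_mul_AopDir_sub_nonneg (hp : 1 ≤ p) {f : ℝ → ℝ} (hf : Antitone f)
    (s : Finset X) (u v : X → ℝ) :
    0 ≤ ∑ x ∈ s, signPow p (u x - v x) * (G.mu x * (G.AopDir f s u x - G.AopDir f s v x)) := by
  have hsplit : ∀ x ∈ s,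
      signPow p (u x - v x) * (G.mu x * (G.AopDir f s u x - G.AopDir f s v x))
        = signPow p (u x - v x) * (G.mu x * G.lapDir s (fun y => u y - v y) x)
          + G.mu x * (signPow p (u x - v x) * (f (v x) - f (u x))) := fun x hx => by
    simp only [AopDir, Finset.mem_coe, hx, if_true, ← lapDir_sub]
    ring
  rw [sum_congr rfl hsplit, sum_add_distrib]
  refine add_nonneg (sum_mul_mu_mul_lapDir_nonneg (signPow_monotone hp) (signPow_zero p) s _)
    (sum_nonneg fun x _ => mul_nonneg (G.mu_pos x).le ?_)
  have hψ := signPow_monotone (p := p) hp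
  rcases le_total (u x) (v x) with h | h
  · exact mul_nonneg_of_nonpos_of_nonpos
      (signPow_zero p ▸ hψ (sub_nonpos.2 h)) (sub_nonpos.2 (hf h))
  · exact mul_nonneg (signPow_zero p ▸ hψ (sub_nonneg.2 h)) (sub_nonneg.2 (hf h))

theorem lpNorm_le_lpNorm_add_mul_of_sum_signPow_mul_nonneg (hp : 1 ≤ p) {s : Finset X}
    {g d : X → ℝ} (hg : support g ⊆ s) (hd : support d ⊆ s)
    (hgd : 0 ≤ ∑ x ∈ s, signPow p (g x) * (G.mu x * d x)) {lam : ℝ} (hlam : 0 ≤ lam) :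
    G.lpNorm p g ≤ G.lpNorm p (fun x => g x + lam * d x) := by
  have hp0 : p ≠ 0 := by linarith
  have hsupp : support (fun x => g x + lam * d x) ⊆ s :=
    (support_add _ _).trans (Set.union_subset hg ((support_mul_subset_right _ _).trans hd))
  rw [lpNorm_eq_sum hp0 hg, lpNorm_eq_sum hp0 hsupp]
  refine Real.rpow_le_rpow (sum_nonneg fun x _ => mul_nonneg (by positivity) (G.mu_pos x).le)
    ?_ (by positivity)
  calc ∑ x ∈ s, |g x| ^ p * G.mu x
      ≤ ∑ x ∈ s, |g x| ^ p * G.mu x + p * lam * ∑ x ∈ s, signPow p (g x) * (G.mu x * d x) :=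
        le_add_of_nonneg_right (mul_nonneg (by positivity) hgd)
    _ = ∑ x ∈ s, (|g x| ^ p + p * signPow p (g x) * (g x + lam * d x - g x)) * G.mu x := by
        rw [mul_sum, ← sum_add_distrib]
        exact sum_congr rfl fun x _ => by ring
    _ ≤ ∑ x ∈ s, |g x + lam * d x| ^ p * G.mu x :=
        sum_le_sum fun x _ => mul_le_mul_of_nonneg_right
          (abs_rpow_add_mul_signPow_mul_sub_le hp _ _) (G.mu_pos x).le

theorem lpNorm_sub_le_AopDir_of_antitone (hp : 1 ≤ p) {f : ℝ → ℝ} (hf : Antitone f)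
    {Y : Set X} (hY : Y.Finite) {u v : X → ℝ} (hu : support u ⊆ Y) (hv : support v ⊆ Y)
    {lam : ℝ} (hlam : 0 ≤ lam) :
    G.lpNorm p (fun x => u x - v x) ≤
      G.lpNorm p (fun x => (u x - v x) + lam * (G.AopDir f Y u x - G.AopDir f Y v x)) := by
  obtain ⟨s, rfl⟩ := hY.exists_finset_coe
  exact lpNorm_le_lpNorm_add_mul_of_sum_signPow_mul_nonneg hp
    ((support_sub _ _).trans (Set.union_subset hu hv))
    ((support_sub _ _).trans (Set.union_subset (support_AopDir_subset f _ u)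
      (support_AopDir_subset f _ v)))
    (sum_signPow_mul_mu_mul_AopDir_sub_nonneg hp hf s u v) hlam

theorem mul_lpNorm_sub_le_AopDir_of_lipschitz (hp : 1 ≤ p) {f : ℝ → ℝ} {L : ℝ}
    (hf : ∀ s t : ℝ, |f t - f s| ≤ L * |t - s|) {Y : Set X} (hY : Y.Finite) {u v : X → ℝ}
    (hu : support u ⊆ Y) (hv : support v ⊆ Y) {lam : ℝ} (hlam : 0 ≤ lam) (hlamL : lam * L < 1) :
    (1 - L * lam) * G.lpNorm p (fun x => u x - v x) ≤
      G.lpNorm p (fun x => (u x - v x) + lam * (G.AopDir f Y u x - G.AopDir f Y v x)) := by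
  have hc : 0 < 1 - L * lam := by linarith
  have hf' : Antitone fun t => f t - L * t := fun a b hab => by
    have := (le_abs_self _).trans (hf a b)
    rw [abs_of_nonneg (sub_nonneg.2 hab)] at this
    linarith
  have hrescale : (fun x => (u x - v x) + lam * (G.AopDir f Y u x - G.AopDir f Y v x))
      = fun x => (1 - L * lam) * ((u x - v x) + lam / (1 - L * lam)
          * (G.AopDir (fun t => f t - L * t) Y u x - G.AopDir (fun t => f t - L * t) Y v x)) := by
    funext x
    have hcancel : (1 - L * lam) * (lam / (1 - L * lam)) = lam := mul_div_cancel₀ lam hc.ne'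
    rw [AopDir_sub_mul_self hu, AopDir_sub_mul_self hv]
    linear_combination (-(G.AopDir f Y u x + L * u x - (G.AopDir f Y v x + L * v x))) * hcancel
  rw [hrescale, lpNorm_const_mul (by linarith), abs_of_pos hc]
  exact mul_le_mul_of_nonneg_left
    (lpNorm_sub_le_AopDir_of_antitone hp hf' hY hu hv (div_nonneg hlam hc.le)) hc.le

theorem memLp_of_support_subset (hp : p ≠ 0) {Y : Set X} (hY : Y.Finite) {u : X → ℝ}
    (hu : support u ⊆ Y) : G.memLp p u := by
  obtain ⟨s, rfl⟩ := hY.exists_finset_coe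
  refine summable_of_ne_finset_zero (s := s) fun x hx => ?_
  rw [notMem_support.1 fun h => hx (hu h), abs_zero, Real.zero_rpow hp, zero_mul]

theorem abs_mul_mu_rpow_one_div_rpow (hp : p ≠ 0) (u : X → ℝ) (x : X) :
    |u x * G.mu x ^ (1 / p)| ^ p = |u x| ^ p * G.mu x := by
  have hμ := (G.mu_pos x).le
  rw [abs_mul, abs_of_nonneg (Real.rpow_nonneg hμ _), Real.mul_rpow (abs_nonneg _)
    (Real.rpow_nonneg hμ _), ← Real.rpow_mul hμ, one_div_mul_cancel hp, Real.rpow_one]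

theorem exists_lp_of_memLp (hp : 0 < p) {u : X → ℝ} (hu : G.memLp p u) :
    ∃ U : lp (fun _ : X => ℝ) (ENNReal.ofReal p), ∀ x, U x = u x * G.mu x ^ (1 / p) := by
  refine ⟨⟨_, (memℓp_gen_iff (by rwa [ENNReal.toReal_ofReal hp.le])).2
    (hu.congr fun x => ?_)⟩, fun _ => rfl⟩
  rw [ENNReal.toReal_ofReal hp.le, Real.norm_eq_abs, abs_mul_mu_rpow_one_div_rpow hp.ne']

theorem lpNorm_eq_norm (hp : 0 < p) {u : X → ℝ} {U : lp (fun _ : X => ℝ) (ENNReal.ofReal p)}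
    (hU : ∀ x, U x = u x * G.mu x ^ (1 / p)) : G.lpNorm p u = ‖U‖ := by
  rw [lp.norm_eq_tsum_rpow (by rwa [ENNReal.toReal_ofReal hp.le]), ENNReal.toReal_ofReal hp.le,
    lpNorm]
  simp_rw [hU, Real.norm_eq_abs, abs_mul_mu_rpow_one_div_rpow hp.ne']

section lp

variable {a b c d : X → ℝ} {A B C D : lp (fun _ : X => ℝ) (ENNReal.ofReal p)}

theorem lpNorm_sub_eq_norm_sub (hp : 0 < p) (hA : ∀ x, A x = a x * G.mu x ^ (1 / p))
    (hB : ∀ x, B x = b x * G.mu x ^ (1 / p)) : G.lpNorm p (fun x => a x - b x) = ‖A - B‖ :=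
  lpNorm_eq_norm hp fun x => by rw [lp.coeFn_sub, Pi.sub_apply, hA, hB, sub_mul]

theorem lpNorm_sub_add_mul_sub_eq_norm [Fact (1 ≤ ENNReal.ofReal p)] (hp : 0 < p)
    (hA : ∀ x, A x = a x * G.mu x ^ (1 / p)) (hB : ∀ x, B x = b x * G.mu x ^ (1 / p))
    (hC : ∀ x, C x = c x * G.mu x ^ (1 / p)) (hD : ∀ x, D x = d x * G.mu x ^ (1 / p)) (lam : ℝ) :
    G.lpNorm p (fun x => (a x - b x) + lam * (c x - d x)) = ‖A - B + lam • (C - D)‖ :=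
  lpNorm_eq_norm hp fun x => by
    rw [lp.coeFn_add, lp.coeFn_sub, lp.coeFn_smul, lp.coeFn_sub, Pi.add_apply, Pi.sub_apply,
      Pi.smul_apply, Pi.sub_apply, smul_eq_mul, hA, hB, hC, hD]
    ring

theorem tendsto_of_lpNorm_sub [Fact (1 ≤ ENNReal.ofReal p)] (hp : 0 < p) {a : ℕ → X → ℝ}
    {A : ℕ → lp (fun _ : X => ℝ) (ENNReal.ofReal p)}
    (hA : ∀ n x, A n x = a n x * G.mu x ^ (1 / p)) (hB : ∀ x, B x = b x * G.mu x ^ (1 / p))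
    (h : Tendsto (fun n => G.lpNorm p (fun x => a n x - b x)) atTop (𝓝 0)) :
    Tendsto A atTop (𝓝 B) :=
  tendsto_iff_norm_sub_tendsto_zero.2 (h.congr fun n => lpNorm_sub_eq_norm_sub hp (hA n) hB)

end lp

theorem mul_lpNorm_sub_le_Aop_of_mem_OmegaP (hp : 1 ≤ p) {f : ℝ → ℝ} {Xn : ℕ → Set X}
    (hfin : ∀ n, (Xn n).Finite) {u v : X → ℝ} (hu : u ∈ G.OmegaP f p Xn)
    (hv : v ∈ G.OmegaP f p Xn) {c lam : ℝ}
    (hstep : ∀ n (a b : X → ℝ), support a ⊆ Xn n → support b ⊆ Xn n →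
      c * G.lpNorm p (fun x => a x - b x) ≤
        G.lpNorm p (fun x => (a x - b x) + lam * (G.AopDir f (Xn n) a x - G.AopDir f (Xn n) b x))) :
    c * G.lpNorm p (fun x => u x - v x) ≤
      G.lpNorm p (fun x => (u x - v x) + lam * (G.Aop f u x - G.Aop f v x)) := by
  have hp0 : 0 < p := by linarith
  have : Fact (1 ≤ ENNReal.ofReal p) := ⟨ENNReal.one_le_ofReal.2 hp⟩
  obtain ⟨⟨hu, -, hAu⟩, un, hun, hun_u, hAun_Au⟩ := hu
  obtain ⟨⟨hv, -, hAv⟩, vn, hvn, hvn_v, hAvn_Av⟩ := hv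
  have hfinLp : ∀ n {a : X → ℝ}, support a ⊆ Xn n →
      ∃ A : lp (fun _ : X => ℝ) (ENNReal.ofReal p), ∀ x, A x = a x * G.mu x ^ (1 / p) :=
    fun n _ ha => exists_lp_of_memLp hp0 (memLp_of_support_subset hp0.ne' (hfin n) ha)
  obtain ⟨U, hU⟩ := exists_lp_of_memLp hp0 hu
  obtain ⟨V, hV⟩ := exists_lp_of_memLp hp0 hv
  obtain ⟨AU, hAU⟩ := exists_lp_of_memLp hp0 hAu
  obtain ⟨AV, hAV⟩ := exists_lp_of_memLp hp0 hAv
  choose Un hUn using fun n => hfinLp n (hun n)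
  choose Vn hVn using fun n => hfinLp n (hvn n)
  choose AUn hAUn using fun n => hfinLp n (support_AopDir_subset f (Xn n) (un n))
  choose AVn hAVn using fun n => hfinLp n (support_AopDir_subset f (Xn n) (vn n))
  have hdiff := (tendsto_of_lpNorm_sub hp0 hUn hU hun_u).sub
    (tendsto_of_lpNorm_sub hp0 hVn hV hvn_v)
  have hAdiff := (tendsto_of_lpNorm_sub hp0 hAUn hAU hAun_Au).sub
    (tendsto_of_lpNorm_sub hp0 hAVn hAV hAvn_Av)
  rw [lpNorm_sub_eq_norm_sub hp0 hU hV, lpNorm_sub_add_mul_sub_eq_norm hp0 hU hV hAU hAV]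
  refine le_of_tendsto_of_tendsto' (hdiff.norm.const_mul c)
    (hdiff.add (hAdiff.const_smul lam)).norm fun n => ?_
  rw [← lpNorm_sub_eq_norm_sub hp0 (hUn n) (hVn n),
    ← lpNorm_sub_add_mul_sub_eq_norm hp0 (hUn n) (hVn n) (hAUn n) (hAVn n)]
  exact hstep n (un n) (vn n) (hun n) (hvn n)

end WGraph

theorem stmt9_general {X : Type*} (G : WGraph X) (f : ℝ → ℝ) (p : ℝ)
    (hp : 1 ≤ p)
    (Xn : ℕ → Set X) (hfin : ∀ n, (Xn n).Finite) :
    (CondF1 f → ∀ u ∈ G.OmegaP f p Xn, ∀ v ∈ G.OmegaP f p Xn, ∀ lam : ℝ, 0 < lam →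
      G.lpNorm p (fun x => u x - v x) ≤
        G.lpNorm p (fun x => (u x - v x) + lam * (G.Aop f u x - G.Aop f v x))) ∧
    (∀ L : ℝ, CondF2 f L →
      ∀ u ∈ G.OmegaP f p Xn, ∀ v ∈ G.OmegaP f p Xn, ∀ lam : ℝ, 0 ≤ lam → lam * L < 1 →
        (1 - L * lam) * G.lpNorm p (fun x => u x - v x) ≤
          G.lpNorm p (fun x => (u x - v x) + lam * (G.Aop f u x - G.Aop f v x))) := by
  refine ⟨fun ⟨_, hf, _⟩ u hu v hv lam hlam => ?_, fun L ⟨_, hf, _⟩ u hu v hv lam hlam hlamL => ?_⟩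
  · simpa using G.mul_lpNorm_sub_le_Aop_of_mem_OmegaP hp hfin hu hv (c := 1)
      fun n a b ha hb => by simpa using
        G.lpNorm_sub_le_AopDir_of_antitone hp hf (hfin n) ha hb hlam.le
  · exact G.mul_lpNorm_sub_le_Aop_of_mem_OmegaP hp hfin hu hv fun n a b ha hb =>
      G.mul_lpNorm_sub_le_AopDir_of_lipschitz hp hf (hfin n) ha hb hlam hlamL

/-- `𝒜` restricted to `Ω_p` is accretive under (F1) and
`L`-accretive under (F2). -/
theorem stmt9 {X : Type*} [Countable X] (G : WGraph X) (f : ℝ → ℝ) (p : ℝ)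
    (hp : 1 ≤ p) (hCp : 1 < p → G.CondCp p)
    (Xn : ℕ → Set X) (hfin : ∀ n, (Xn n).Finite) (hmono : Monotone Xn)
    (hexh : (⋃ n, Xn n) = Set.univ) :
    (CondF1 f → ∀ u ∈ G.OmegaP f p Xn, ∀ v ∈ G.OmegaP f p Xn, ∀ lam : ℝ, 0 < lam →
      G.lpNorm p (fun x => u x - v x) ≤
        G.lpNorm p (fun x => (u x - v x) + lam * (G.Aop f u x - G.Aop f v x))) ∧
    (∀ L : ℝ, CondF2 f L →
      ∀ u ∈ G.OmegaP f p Xn, ∀ v ∈ G.OmegaP f p Xn, ∀ lam : ℝ, 0 ≤ lam → lam * L < 1 →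
        (1 - L * lam) * G.lpNorm p (fun x => u x - v x) ≤
          G.lpNorm p (fun x => (u x - v x) + lam * (G.Aop f u x - G.Aop f v x))) :=
  stmt9_general G f p hp Xn hfin
end
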